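/- arXiv:2502.10073 — 7 statements merged into one kernel-verified Lean document; each statement's English description precedes it below -/
import Mathlib

section
/- Let X be a u.l.f. metric space with base point x₀, and define X_n^e = {x : 2^{6n+1} ≤ d(x,x₀) ≤ 2^{6n+5}}. Then the sequence (X_n^e) is sparse: the X_n^e are pairwise disjoint finite sets with d(X_n^e, X_m^e) > 2·max{n,m} for all n ≠ m. -/
/-! By the triangle inequality, points of the annuli with indices `n < m` are at distance at least
`2^(6m+1) - 2^(6n+5) ≥ 2^(6m) > 2m`. Each annulus lies in a closed ball, hence is finite, and
disjointness is the case `x = y` of this separation. -/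

open Metric

lemma two_mul_add_two_pow_lt {n m : ℕ} (h : n < m) : 2 * m + 2 ^ (6 * n + 5) < 2 ^ (6 * m + 1) := by
  have h_pow : 2 ^ (6 * n + 5) < 2 ^ (6 * m) := Nat.pow_lt_pow_right (by norm_num) (by omega)
  have h_lin : 6 * m < 2 ^ (6 * m) := Nat.lt_two_pow_self
  rw [pow_succ 2 (6 * m)]
  omega

section

variable {X : Type*} [MetricSpace X]

def annulus (x₀ : X) (r R : ℝ) : Set X := {x | r ≤ dist x x₀ ∧ dist x x₀ ≤ R}

lemma annulus_subset_closedBall (x₀ : X) (r R : ℝ) : annulus x₀ r R ⊆ closedBall x₀ R :=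
  fun _ hx => hx.2

lemma lt_dist_of_mem_annulus {x₀ x y : X} {r₁ R₁ r₂ R₂ s : ℝ} (h : s + R₁ < r₂)
    (hx : x ∈ annulus x₀ r₁ R₁) (hy : y ∈ annulus x₀ r₂ R₂) : s < dist x y := by
  have := dist_triangle y x x₀
  rw [dist_comm y x] at this
  linarith [hx.2, hy.1]

end

/-- The annuli `X_n^e = {x : 2^{6n+1} ≤ d(x,x₀) ≤ 2^{6n+5}}` in a u.l.f. metric space
form a sparse sequence: pairwise disjoint finite sets with `d(X_n^e, X_m^e) > 2·max{n,m}`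
for `n ≠ m`. -/
theorem annuli_sparse {X : Type*} [MetricSpace X]
    (hX : ∀ (x : X) (r : ℝ), (Metric.closedBall x r).Finite) (x₀ : X) :
    let Xe : ℕ → Set X := fun n =>
      {x | (2 : ℝ) ^ (6 * n + 1) ≤ dist x x₀ ∧ dist x x₀ ≤ (2 : ℝ) ^ (6 * n + 5)}
    (∀ n, (Xe n).Finite) ∧
    (Pairwise (Function.onFun Disjoint Xe)) ∧
    (∀ n m : ℕ, n ≠ m → ∀ x ∈ Xe n, ∀ y ∈ Xe m, (2 * max n m : ℝ) < dist x y) := by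
  intro Xe
  have separated {n m : ℕ} (h : n < m) {x y : X} (hx : x ∈ Xe n) (hy : y ∈ Xe m) :
      (2 * m : ℝ) < dist x y :=
    lt_dist_of_mem_annulus (by exact_mod_cast two_mul_add_two_pow_lt h) hx hy
  have sparse (n m : ℕ) (hnm : n ≠ m) (x : X) (hx : x ∈ Xe n) (y : X) (hy : y ∈ Xe m) :
      (2 * max n m : ℝ) < dist x y := by
    rcases hnm.lt_or_gt with h | h
    · simpa [max_eq_right h.le] using separated h hx hy
    · simpa [max_eq_left h.le, dist_comm] using separated h hy hx
  refine ⟨fun n => (hX x₀ _).subset (annulus_subset_closedBall _ _ _), ?_, sparse⟩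
  refine fun n m hnm => Set.disjoint_left.2 fun x hn hm => ?_
  have h_self := sparse n m hnm x hn x hm
  rw [dist_self] at h_self
  linarith [show (0 : ℝ) ≤ 2 * max n m by positivity]
end

section
/- Let X be a locally finite metric space, (X_n) a sparse sequence, and f : ℕ → ℕ a function with f(n) → ∞. If g : X → 𝔻 is supported on ⋃_n X_n and g restricted to X_n lies in M_{n,f(n)} for every n, then g is slowly oscillating. -/
def SlowlyOscillating {X : Type*} [MetricSpace X] (f : X → ℂ) : Prop :=
  (∃ C : ℝ, ∀ x, ‖f x‖ ≤ C) ∧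
  ∀ ε : ℝ, 0 < ε → ∀ R : ℝ, 0 < R → ∃ F : Set X, F.Finite ∧
    ∀ x x', x ∉ F → x' ∉ F → dist x x' ≤ R → ‖f x - f x'‖ < ε

def Mset {X : Type*} [MetricSpace X] (Xn : Set X) (n m : ℕ) : Set (X → ℂ) :=
  {g | (∀ x, ‖g x‖ ≤ 1) ∧ (∀ x, x ∉ Xn → g x = 0) ∧
    ∀ x x', (∃ z ∈ Xn, dist x z ≤ (n : ℝ)) → (∃ z ∈ Xn, dist x' z ≤ (n : ℝ)) →
      dist x x' ≤ (m : ℝ) → ‖g x - g x'‖ ≤ 1 / (m + 1)}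

open Filter Set

/-! Far out, every point of the support lies in some `X_n` with `n` large. Sparseness makes the
`R`-neighbourhood of such a point meet the support only inside `X_n`, so near it `g` agrees with
its restriction to `X_n`, whose oscillation at scale `f n ≥ R` is at most `1 / (f n + 1)`. -/

lemma norm_le_one_of_norm_indicator_le_one {X : Type*} {Xs : ℕ → Set X} {g : X → ℂ}
    (hsupp : ∀ x, g x ≠ 0 → x ∈ ⋃ n, Xs n)
    (hbound : ∀ n x, ‖(Xs n).indicator g x‖ ≤ 1) (x : X) : ‖g x‖ ≤ 1 := by
  by_cases hgx : g x = 0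
  · simp [hgx]
  · obtain ⟨n, hxn⟩ := mem_iUnion.1 (hsupp x hgx)
    simpa [indicator_of_mem hxn] using hbound n x

section

variable {X : Type*} [MetricSpace X] {Xs : ℕ → Set X} {g : X → ℂ}

lemma indicator_apply_eq_of_dist_le
    (hsparse : ∀ n m : ℕ, n ≠ m → ∀ x ∈ Xs n, ∀ y ∈ Xs m, (2 * max n m : ℝ) < dist x y)
    (hsupp : ∀ x, g x ≠ 0 → x ∈ ⋃ n, Xs n) {n : ℕ} {x x' : X} (hx : x ∈ Xs n)
    (hd : dist x x' ≤ 2 * n) : (Xs n).indicator g x' = g x' := by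
  by_cases hgx' : g x' = 0
  · simp [hgx']
  obtain ⟨m, hx'm⟩ := mem_iUnion.1 (hsupp x' hgx')
  obtain rfl : n = m := by
    by_contra hnm
    have hfar := hsparse n m hnm x hx x' hx'm
    have hn_le_max : (n : ℝ) ≤ (max n m : ℕ) := Nat.cast_le.2 (le_max_left n m)
    linarith
  exact indicator_of_mem hx'm g

lemma norm_sub_le_of_indicator_mem_Mset
    (hsparse : ∀ n m : ℕ, n ≠ m → ∀ x ∈ Xs n, ∀ y ∈ Xs m, (2 * max n m : ℝ) < dist x y)
    (hsupp : ∀ x, g x ≠ 0 → x ∈ ⋃ n, Xs n) {n m : ℕ}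
    (hmem : (Xs n).indicator g ∈ Mset (Xs n) n m) {x x' : X} (hx : x ∈ Xs n)
    (hdn : dist x x' ≤ n) (hdm : dist x x' ≤ m) : ‖g x - g x'‖ ≤ 1 / (m + 1) := by
  have hosc := hmem.2.2 x x' ⟨x, hx, by simp⟩ ⟨x, hx, by rwa [dist_comm]⟩ hdm
  rwa [indicator_of_mem hx, indicator_apply_eq_of_dist_le hsparse hsupp hx (by linarith)] at hosc

end

lemma eventually_le_and_one_div_lt {f : ℕ → ℕ} (hf : Tendsto f atTop atTop) (R : ℝ) {ε : ℝ}
    (hε : 0 < ε) : ∀ᶠ n : ℕ in atTop, R ≤ n ∧ R ≤ f n ∧ 1 / ((f n : ℝ) + 1) < ε := by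
  have hf' : Tendsto (fun n => (f n : ℝ)) atTop atTop := tendsto_natCast_atTop_atTop.comp hf
  have hinv : Tendsto (fun n => 1 / ((f n : ℝ) + 1)) atTop (nhds 0) := by
    simp only [one_div]
    exact (hf'.atTop_add (tendsto_const_nhds (x := (1 : ℝ)))).inv_tendsto_atTop
  exact (tendsto_natCast_atTop_atTop.eventually_ge_atTop R).and
    ((hf'.eventually_ge_atTop R).and (hinv.eventually_lt_const hε))

theorem slowlyOscillating_of_mem_Mset_general {X : Type*} [MetricSpace X]
    (Xs : ℕ → Set X) (hfin : ∀ n, (Xs n).Finite)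
    (hsparse : ∀ n m : ℕ, n ≠ m → ∀ x ∈ Xs n, ∀ y ∈ Xs m, (2 * max n m : ℝ) < dist x y)
    (f : ℕ → ℕ) (hf : Filter.Tendsto f Filter.atTop Filter.atTop)
    (g : X → ℂ) (hsupp : ∀ x, g x ≠ 0 → x ∈ ⋃ n, Xs n)
    (hmem : ∀ n, (Xs n).indicator g ∈ Mset (Xs n) n (f n)) :
    SlowlyOscillating g := by
  refine ⟨⟨1, norm_le_one_of_norm_indicator_le_one hsupp fun n => (hmem n).1⟩,
    fun ε hε R _ => ?_⟩
  obtain ⟨N, hN⟩ := eventually_atTop.1 (eventually_le_and_one_div_lt hf R hε)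
  refine ⟨⋃ n < N, Xs n, (finite_lt_nat N).biUnion fun n _ => hfin n, ?_⟩
  have hosc_lt : ∀ x x', x ∉ ⋃ n < N, Xs n → dist x x' ≤ R → g x ≠ 0 → ‖g x - g x'‖ < ε := by
    intro x x' hx hd hgx
    obtain ⟨n, hxn⟩ := mem_iUnion.1 (hsupp x hgx)
    have hNn : N ≤ n := not_lt.1 fun hn => hx (mem_biUnion hn hxn)
    obtain ⟨hRn, hRf, hfε⟩ := hN n hNn
    exact (norm_sub_le_of_indicator_mem_Mset hsparse hsupp (hmem n) hxn
      (hd.trans hRn) (hd.trans hRf)).trans_lt hfε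
  intro x x' hx hx' hd
  by_cases hgx : g x = 0
  · by_cases hgx' : g x' = 0
    · simpa [hgx, hgx'] using hε
    · rw [norm_sub_rev]
      exact hosc_lt x' x hx' (by rwa [dist_comm]) hgx'
  · exact hosc_lt x x' hx hd hgx

/-- If `f(n) → ∞` and `g` restricted to `X_n` lies in `M_{n,f(n)}` for every `n`,
then `g` is slowly oscillating. -/
theorem slowlyOscillating_of_mem_Mset {X : Type*} [MetricSpace X]
    (hX : ∀ (x : X) (r : ℝ), (Metric.closedBall x r).Finite)
    (Xs : ℕ → Set X) (hfin : ∀ n, (Xs n).Finite)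
    (hdisj : Pairwise (Function.onFun Disjoint Xs))
    (hsparse : ∀ n m : ℕ, n ≠ m → ∀ x ∈ Xs n, ∀ y ∈ Xs m, (2 * max n m : ℝ) < dist x y)
    (f : ℕ → ℕ) (hf : Filter.Tendsto f Filter.atTop Filter.atTop)
    (g : X → ℂ) (hsupp : ∀ x, g x ≠ 0 → x ∈ ⋃ n, Xs n)
    (hmem : ∀ n, (Xs n).indicator g ∈ Mset (Xs n) n (f n)) :
    SlowlyOscillating g :=
  slowlyOscillating_of_mem_Mset_general Xs hfin hsparse f hf g hsupp hmem
end

section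
/- Let X be a locally finite metric space and (X_n) a sparse sequence. For every slowly oscillating contraction g : X → 𝔻 supported on ⋃_n X_n there exists f : ℕ → ℕ with f(n) → ∞ such that g restricted to X_n belongs to M_{n,f(n)} for every n. -/
/-!
Every point lies in the `n`-neighbourhood of at most one `Xₙ`, by sparseness, so a finite set
meets only finitely many of these neighbourhoods. Slow oscillation of `g` at precision
`1 / (m + 1)` and scale `m + 1` holds off a finite set, hence on the `n`-neighbourhood of `Xₙ`
for all large `n`; on that neighbourhood `g` agrees with its restriction to `Xₙ`. Taking for
`f n` the largest `m ≤ n` at which the bound holds gives `f n → ∞`.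
-/

open Filter Set

theorem Nat.exists_tendsto_atTop_forall_of_eventually {P : ℕ → ℕ → Prop} (h0 : ∀ n, P n 0)
    (h : ∀ m, ∀ᶠ n in atTop, P n m) :
    ∃ f : ℕ → ℕ, Tendsto f atTop atTop ∧ ∀ n, P n (f n) := by
  classical
  refine ⟨fun n => Nat.findGreatest (P n) n, tendsto_atTop.2 fun m => ?_,
    fun n => Nat.findGreatest_spec (Nat.zero_le n) (h0 n)⟩
  filter_upwards [h m, eventually_ge_atTop m] with n hPnm hmn
  exact Nat.le_findGreatest hmn hPnm

section Sparse

variable {X : Type*} [MetricSpace X]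

def closedNbhd (s : Set X) (r : ℝ) : Set X := {x | ∃ z ∈ s, dist x z ≤ r}

def Sparse (Xs : ℕ → Set X) : Prop :=
  ∀ n m : ℕ, n ≠ m → ∀ x ∈ Xs n, ∀ y ∈ Xs m, (2 * max n m : ℝ) < dist x y

theorem Sparse.subsingleton_setOf_mem_closedNbhd {Xs : ℕ → Set X} (hXs : Sparse Xs) (x : X) :
    {n : ℕ | x ∈ closedNbhd (Xs n) n}.Subsingleton := by
  rintro n ⟨z, hz, hxz⟩ m ⟨w, hw, hxw⟩
  by_contra hnm
  have hsep := hXs n m hnm z hz w hw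
  have hn : (n : ℝ) ≤ (max n m : ℕ) := by exact_mod_cast le_max_left n m
  have hm : (m : ℝ) ≤ (max n m : ℕ) := by exact_mod_cast le_max_right n m
  linarith [dist_triangle_left z w x]

theorem Sparse.indicator_eq_of_mem_closedNbhd {M : Type*} [Zero M] {Xs : ℕ → Set X}
    (hXs : Sparse Xs) {g : X → M} (hsupp : ∀ x, g x ≠ 0 → x ∈ ⋃ n, Xs n) {n : ℕ} {x : X}
    (hx : x ∈ closedNbhd (Xs n) n) : (Xs n).indicator g x = g x := by
  by_cases hxn : x ∈ Xs n
  · exact indicator_of_mem hxn g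
  rw [indicator_of_notMem hxn, eq_comm]
  by_contra hgx
  obtain ⟨m, hxm⟩ := mem_iUnion.1 (hsupp x hgx)
  have hmx : x ∈ closedNbhd (Xs m) m := ⟨x, hxm, by simp⟩
  exact hxn (hXs.subsingleton_setOf_mem_closedNbhd x hx hmx ▸ hxm)

variable {g : X → ℂ}

def SmallOscillation (g : X → ℂ) (A : Set X) (m : ℕ) : Prop :=
  ∀ x ∈ A, ∀ x' ∈ A, dist x x' ≤ m → ‖g x - g x'‖ ≤ 1 / (m + 1)

theorem smallOscillation_zero (g : X → ℂ) (A : Set X) : SmallOscillation g A 0 := by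
  intro x _ x' _ hxx'
  simp [dist_le_zero.1 (by exact_mod_cast hxx')]

theorem SlowlyOscillating.eventually_norm_sub_lt (hg : SlowlyOscillating g) {A : ℕ → Set X}
    (hA : ∀ x, {n | x ∈ A n}.Finite) {ε R : ℝ} (hε : 0 < ε)
    (hR : 0 < R) :
    ∀ᶠ n in atTop, ∀ x ∈ A n, ∀ x' ∈ A n, dist x x' ≤ R → ‖g x - g x'‖ < ε := by
  obtain ⟨F, hF, hgF⟩ := hg.2 ε hε R hR
  have hmeet : (⋃ p ∈ F, {n | p ∈ A n}).Finite := hF.biUnion fun p _ => hA p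
  rw [← Nat.cofinite_eq_atTop]
  filter_upwards [hmeet.eventually_cofinite_notMem] with n hn x hx x' hx'
  refine hgF x x' (fun hxF => hn ?_) (fun hx'F => hn ?_)
  · exact mem_biUnion hxF hx
  · exact mem_biUnion hx'F hx'

theorem Sparse.indicator_mem_Mset {Xs : ℕ → Set X} (hXs : Sparse Xs)
    (hcontr : ∀ x, ‖g x‖ ≤ 1) (hsupp : ∀ x, g x ≠ 0 → x ∈ ⋃ n, Xs n) {n m : ℕ}
    (hosc : SmallOscillation g (closedNbhd (Xs n) n) m) :
    (Xs n).indicator g ∈ Mset (Xs n) n m := by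
  refine ⟨fun x => (norm_indicator_le_norm_self (s := Xs n) g x).trans (hcontr x),
    fun x hx => indicator_of_notMem hx g, fun x x' hx hx' hxx' => ?_⟩
  rw [hXs.indicator_eq_of_mem_closedNbhd hsupp hx, hXs.indicator_eq_of_mem_closedNbhd hsupp hx']
  exact hosc x hx x' hx' hxx'

end Sparse

theorem exists_Mset_of_slowlyOscillating_general {X : Type*} [MetricSpace X]
    (Xs : ℕ → Set X)
    (hsparse : ∀ n m : ℕ, n ≠ m → ∀ x ∈ Xs n, ∀ y ∈ Xs m, (2 * max n m : ℝ) < dist x y)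
    (g : X → ℂ) (hso : SlowlyOscillating g) (hcontr : ∀ x, ‖g x‖ ≤ 1)
    (hsupp : ∀ x, g x ≠ 0 → x ∈ ⋃ n, Xs n) :
    ∃ f : ℕ → ℕ, Filter.Tendsto f Filter.atTop Filter.atTop ∧
      ∀ n, (Xs n).indicator g ∈ Mset (Xs n) n (f n) := by
  have hXs : Sparse Xs := hsparse
  have hosc (m : ℕ) : ∀ᶠ n in atTop, SmallOscillation g (closedNbhd (Xs n) n) m :=
    (hso.eventually_norm_sub_lt (fun x => (hXs.subsingleton_setOf_mem_closedNbhd x).finite)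
      (ε := 1 / (m + 1)) (R := m + 1) (by positivity) (by positivity)).mono
      fun n hn x hx x' hx' hxx' => (hn x hx x' hx' (by linarith)).le
  obtain ⟨f, hf, hfosc⟩ :=
    Nat.exists_tendsto_atTop_forall_of_eventually (fun n => smallOscillation_zero g _) hosc
  exact ⟨f, hf, fun n => hXs.indicator_mem_Mset hcontr hsupp (hfosc n)⟩

/-- Every slowly oscillating contraction supported on a sparse sequence belongs to
`M_f` for some `f : ℕ → ℕ` tending to infinity. -/
theorem exists_Mset_of_slowlyOscillating {X : Type*} [MetricSpace X]
    (hX : ∀ (x : X) (r : ℝ), (Metric.closedBall x r).Finite)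
    (Xs : ℕ → Set X) (hfin : ∀ n, (Xs n).Finite)
    (hdisj : Pairwise (Function.onFun Disjoint Xs))
    (hsparse : ∀ n m : ℕ, n ≠ m → ∀ x ∈ Xs n, ∀ y ∈ Xs m, (2 * max n m : ℝ) < dist x y)
    (g : X → ℂ) (hso : SlowlyOscillating g) (hcontr : ∀ x, ‖g x‖ ≤ 1)
    (hsupp : ∀ x, g x ≠ 0 → x ∈ ⋃ n, Xs n) :
    ∃ f : ℕ → ℕ, Filter.Tendsto f Filter.atTop Filter.atTop ∧
      ∀ n, (Xs n).indicator g ∈ Mset (Xs n) n (f n) :=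
  exists_Mset_of_slowlyOscillating_general Xs hsparse g hso hcontr hsupp
end

section
/- Let X be a locally finite metric space, (X_n) a sequence of pairwise disjoint finite subsets, m ∈ ℕ, and x ∈ X with d(x, X ∖ X_n) ≥ (m+1)². Then the marker function g_{x,m} : X → [0,1] defined by g_{x,m}(x') = max{0, 1 − d(x',x)/(m+1)²} belongs to M_{n,m}: it is supported on X_n, and for all x₁, x₂ in the n-neighborhood of X_n with d(x₁,x₂) ≤ m we have |g_{x,m}(x₁) − g_{x,m}(x₂)| ≤ 1/(m+1). -/
/-- The marker function `g_{x,m}(x') = max{0, 1 - d(x',x)/(m+1)²}` belongs to `M_{n,m}`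
whenever `d(x, X ∖ X_n) ≥ (m+1)²`: it takes values in `[0,1]`, is supported on `X_n`, and
its oscillation over pairs at distance at most `m` in the `n`-neighborhood of `X_n`
is at most `1/(m+1)`. -/
theorem marker_mem_Mset {X : Type*} [MetricSpace X]
    (hX : ∀ (x : X) (r : ℝ), (Metric.closedBall x r).Finite)
    (Xs : ℕ → Set X) (hfin : ∀ n, (Xs n).Finite)
    (hdisj : Pairwise (Function.onFun Disjoint Xs))
    (n m : ℕ) (x : X)
    (hint : ∀ z : X, z ∉ Xs n → ((m : ℝ) + 1) ^ 2 ≤ dist x z) :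
    let g : X → ℝ := fun x' => max 0 (1 - dist x' x / ((m : ℝ) + 1) ^ 2)
    (∀ x', 0 ≤ g x' ∧ g x' ≤ 1) ∧
    (∀ x', x' ∉ Xs n → g x' = 0) ∧
    (∀ x₁ x₂ : X, (∃ z ∈ Xs n, dist x₁ z ≤ (n : ℝ)) → (∃ z ∈ Xs n, dist x₂ z ≤ (n : ℝ)) →
      dist x₁ x₂ ≤ (m : ℝ) → |g x₁ - g x₂| ≤ 1 / ((m : ℝ) + 1)) := by
  intro g
  have hm1 : (0:ℝ) < (m : ℝ) + 1 := by positivity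
  have hM : (0:ℝ) < ((m : ℝ) + 1) ^ 2 := by positivity
  refine ⟨?_, ?_, ?_⟩
  · intro x'
    constructor
    · exact le_max_left _ _
    · have : (0:ℝ) ≤ dist x' x / ((m : ℝ) + 1) ^ 2 := by positivity
      simp only [g, max_le_iff]
      constructor <;> linarith
  · intro x' hx'
    have h := hint x' hx'
    rw [dist_comm] at h
    have : 1 - dist x' x / ((m : ℝ) + 1) ^ 2 ≤ 0 := by
      rw [sub_nonpos, le_div_iff₀ hM, one_mul]; exact h
    simp only [g, max_eq_left this]
  · intro x₁ x₂ _ _ hd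
    have key : |g x₁ - g x₂| ≤ |(1 - dist x₁ x / ((m : ℝ) + 1) ^ 2)
        - (1 - dist x₂ x / ((m : ℝ) + 1) ^ 2)| := by
      simp only [g, max_comm (0:ℝ)]
      exact abs_max_sub_max_le_abs _ _ 0
    have e : (1 - dist x₁ x / ((m : ℝ) + 1) ^ 2)
        - (1 - dist x₂ x / ((m : ℝ) + 1) ^ 2)
        = (dist x₂ x - dist x₁ x) / ((m : ℝ) + 1) ^ 2 := by ring
    rw [e, abs_div, abs_of_pos hM] at key
    have hdd : |dist x₂ x - dist x₁ x| ≤ dist x₁ x₂ := by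
      rw [abs_sub_comm]; exact abs_dist_sub_le x₁ x₂ x
    calc |g x₁ - g x₂| ≤ |dist x₂ x - dist x₁ x| / ((m : ℝ) + 1) ^ 2 := key
      _ ≤ (m : ℝ) / ((m : ℝ) + 1) ^ 2 := by gcongr; exact hdd.trans hd
      _ ≤ 1 / ((m : ℝ) + 1) := by
          rw [div_le_div_iff₀ hM hm1]
          nlinarith
end

section
/- Let g : ℕ → ℕ be strictly increasing with g(0) = 0, and define f̄(k) = max{n : g(n) ≤ k}. Then f̄ : ℕ → ℕ is well defined, tends to infinity, and for any f : ℕ → ℕ tending to infinity, if f̃ ≤* g (where f̃(n) = min{k : ∀k' ≥ k, f(k') ≥ n}), then f̄ ≤* f. -/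
open Filter

/-- For `g : ℕ → ℕ` strictly increasing with `g 0 = 0`, the function
`f̄ k = max{n : g n ≤ k}` is well-defined, tends to infinity, and satisfies `f̄ ≤* f`
whenever `f` tends to infinity and `f̃ ≤* g`, where `f̃ n = min{k : ∀ k' ≥ k, f k' ≥ n}`. -/
theorem fbar_well_defined (g : ℕ → ℕ) (hg : StrictMono g) (hg0 : g 0 = 0) :
    (∀ k : ℕ, ∃ n : ℕ, IsGreatest {n : ℕ | g n ≤ k} n) ∧
    (∀ fbar : ℕ → ℕ, (∀ k, IsGreatest {n : ℕ | g n ≤ k} (fbar k)) →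
      Tendsto fbar atTop atTop ∧
      ∀ f ft : ℕ → ℕ, Tendsto f atTop atTop →
        (∀ n, IsLeast {k : ℕ | ∀ k' ≥ k, n ≤ f k'} (ft n)) →
        ft ≤ᶠ[atTop] g → fbar ≤ᶠ[atTop] f) := by
  constructor
  · intro k
    have hne : ({n : ℕ | g n ≤ k} : Set ℕ).Nonempty := ⟨0, by simp [hg0]⟩
    have hbdd : BddAbove {n : ℕ | g n ≤ k} := by
      refine ⟨k, fun n hn => ?_⟩
      exact le_trans hg.le_apply hn
    exact ⟨sSup _, Nat.sSup_mem hne hbdd, fun n hn => le_csSup hbdd hn⟩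
  · intro fbar hfbar
    have htend : Tendsto fbar atTop atTop := by
      refine tendsto_atTop.2 fun N => ?_
      filter_upwards [eventually_ge_atTop (g N)] with k hk
      exact (hfbar k).2 hk
    refine ⟨htend, fun f ft hf hft hle => ?_⟩
    rw [EventuallyLE, eventually_atTop] at hle
    obtain ⟨M, hM⟩ := hle
    filter_upwards [htend.eventually_ge_atTop M] with k hk
    have h1 : ft (fbar k) ≤ g (fbar k) := hM _ hk
    have h2 : g (fbar k) ≤ k := (hfbar k).1
    exact (hft (fbar k)).1 k (le_trans h1 h2)
end

section
/- Let X be a u.l.f. metric space with basepoint x₀, and define X_n^e, X_n^o as the annuli with radii [2^{6n+1}, 2^{6n+5}] and [2^{6n+4}, 2^{6n+8}] respectively. Then for every slowly oscillating contraction g : X → 𝔻 there exist slowly oscillating functions g_e, g_o with supp(g_e) ⊆ ⋃_n X_n^e, supp(g_o) ⊆ ⋃_n X_n^o, such that g − g_e − g_o vanishes at infinity; moreover if x ∈ X_n^e satisfies |g_e(x)| ≥ 1/2 then d(x, X ∖ X_n^e) ≥ n, and similarly for g_o. -/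
def VanishesAtInfinity {X : Type*} (f : X → ℂ) : Prop :=
  ∀ ε : ℝ, 0 < ε → {x : X | ε ≤ ‖f x‖}.Finite

open Real Metric

theorem AddCircle.norm_coe_eq_min {p t : ℝ} (hp : 0 < p) {n : ℤ} (h₀ : n * p ≤ t)
    (h₁ : t ≤ n * p + p) : ‖(t : AddCircle p)‖ = min (t - n * p) (n * p + p - t) := by
  have hshift (m : ℤ) : ((t - m * p : ℝ) : AddCircle p) = t := by
    rw [AddCircle.coe_sub, ← zsmul_eq_mul, AddCircle.coe_zsmul, AddCircle.coe_period, smul_zero,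
      sub_zero]
  have hnorm (m : ℤ) (hm : |t - m * p| ≤ p / 2) : ‖(t : AddCircle p)‖ = |t - m * p| := by
    rw [← hshift m, AddCircle.norm_coe_eq_abs_iff p hp.ne', abs_of_pos hp]
    exact hm
  rcases le_total (t - n * p) (p / 2) with h | h
  · rw [hnorm n (by rwa [abs_of_nonneg (by linarith)]), abs_of_nonneg (by linarith),
      min_eq_left (by linarith)]
  · have hn : |t - ↑(n + 1) * p| = n * p + p - t := by
      push_cast; rw [abs_of_nonpos (by linarith)]; ring
    rw [hnorm (n + 1) (by rw [hn]; linarith), hn, min_eq_right (by linarith)]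

theorem AddCircle.norm_coe_add_norm_coe_sub_half_period {p : ℝ} (hp : 0 < p) (t : ℝ) :
    ‖(t : AddCircle p)‖ + ‖((t - p / 2 : ℝ) : AddCircle p)‖ = p / 2 := by
  set n := ⌊t / p⌋
  have h₀ : n * p ≤ t := (le_div_iff₀ hp).1 (Int.floor_le _)
  have h₁ : t < n * p + p := by
    have := (div_lt_iff₀ hp).1 (Int.lt_floor_add_one (t / p)); linarith
  rw [AddCircle.norm_coe_eq_min hp h₀ h₁.le]
  rcases le_total (t - n * p) (p / 2) with h | h
  · rw [AddCircle.norm_coe_eq_min hp (n := n - 1) (by push_cast; linarith)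
      (by push_cast; linarith)]
    push_cast
    rw [min_eq_left (by linarith), min_eq_right (by linarith)]; ring
  · rw [AddCircle.norm_coe_eq_min hp (n := n) (by linarith) (by linarith)]
    rw [min_eq_right (by linarith), min_eq_left (by linarith)]; ring

-- `‖(t : AddCircle 6)‖` is the distance from `t` to `6ℤ`.
noncomputable def periodicBump (t : ℝ) : ℝ :=
  max 0 (min 1 (‖(t : AddCircle (6 : ℝ))‖ - 1))

theorem periodicBump_nonneg (t : ℝ) : 0 ≤ periodicBump t := le_max_left _ _

theorem periodicBump_le_one (t : ℝ) : periodicBump t ≤ 1 :=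
  max_le zero_le_one (min_le_left _ _)

theorem lipschitzWith_periodicBump : LipschitzWith 1 periodicBump := by
  have hnorm : LipschitzWith 1 fun t : ℝ => ‖(t : AddCircle (6 : ℝ))‖ - 1 :=
    LipschitzWith.of_dist_le_mul fun t s => by
      simpa [Real.dist_eq, ← AddCircle.coe_sub] using
        (abs_norm_sub_norm_le _ _).trans QuotientAddGroup.norm_mk_le_norm
  exact (hnorm.const_min 1).const_max 0

theorem periodicBump_add_periodicBump_sub_three (t : ℝ) :
    periodicBump t + periodicBump (t - 3) = 1 := by
  have h := AddCircle.norm_coe_add_norm_coe_sub_half_period (p := 6) (by norm_num) t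
  rw [show (6 : ℝ) / 2 = 3 by norm_num] at h
  simp only [periodicBump, max_def, min_def]
  split_ifs <;> linarith

theorem periodicBump_eq {n : ℕ} {t : ℝ} (h₀ : 6 * n ≤ t) (h₁ : t ≤ 6 * n + 6) :
    periodicBump t = max 0 (min 1 (min (t - 6 * n) (6 * n + 6 - t) - 1)) := by
  rw [periodicBump, AddCircle.norm_coe_eq_min (n := n) (by norm_num) (by push_cast; linarith)
    (by push_cast; linarith)]
  push_cast; ring_nf

theorem mem_Ioo_of_periodicBump_pos {n : ℕ} {t : ℝ} (h₀ : 6 * n ≤ t)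
    (h₁ : t ≤ 6 * n + 6) (h : 0 < periodicBump t) : 6 * n + 1 < t ∧ t < 6 * n + 5 := by
  rw [periodicBump_eq h₀ h₁] at h
  simp only [max_def, min_def] at h
  constructor <;> split_ifs at h <;> linarith

theorem mem_Icc_of_half_le_periodicBump {n : ℕ} {t : ℝ} (h₀ : 6 * n ≤ t)
    (h₁ : t ≤ 6 * n + 6) (h : 1 / 2 ≤ periodicBump t) :
    6 * n + 3 / 2 ≤ t ∧ t ≤ 6 * n + 9 / 2 := by
  rw [periodicBump_eq h₀ h₁] at h
  simp only [max_def, min_def] at h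
  constructor <;> split_ifs at h <;> linarith

theorem abs_log_sub_log_le {m a b : ℝ} (hm : 0 < m) (ha : m ≤ a) (hb : m ≤ b) :
    |log a - log b| ≤ |a - b| / m := by
  have key {u v : ℝ} (hu : m ≤ u) (hv : m ≤ v) : log u - log v ≤ |u - v| / m := by
    have hv₀ : 0 < v := hm.trans_le hv
    calc log u - log v = log (u / v) := (log_div (by linarith) hv₀.ne').symm
      _ ≤ u / v - 1 := log_le_sub_one_of_pos (div_pos (by linarith) hv₀)
      _ = (u - v) / v := by field_simp
      _ ≤ |u - v| / v := by gcongr; exact le_abs_self _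
      _ ≤ |u - v| / m := div_le_div_of_nonneg_left (abs_nonneg _) hm hv
  rw [abs_sub_le_iff]
  exact ⟨key ha hb, abs_sub_comm a b ▸ key hb ha⟩

theorem two_pow_div_two_lt_abs_sub (k : ℕ) {d e : ℝ} (hd : 0 < d)
    (h₁ : k + 3 / 2 ≤ logb 2 d) (h₂ : logb 2 d ≤ k + 9 / 2)
    (he : ¬((2 : ℝ) ^ (k + 1) ≤ e ∧ e ≤ 2 ^ (k + 5))) : (2 : ℝ) ^ k / 2 < |d - e| := by
  have hsqrt (m : ℕ) : (2 : ℝ) ^ ((m : ℝ) + 1 / 2) = 2 ^ m * √2 := by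
    rw [rpow_add two_pos, rpow_natCast, sqrt_eq_rpow]
  have hlow : 2 ^ (k + 1) * √2 ≤ d := by
    rw [le_logb_iff_rpow_le one_lt_two hd] at h₁
    convert h₁ using 1
    rw [show ((k : ℝ) + 3 / 2) = ((k + 1 : ℕ) : ℝ) + 1 / 2 by push_cast; ring, hsqrt]
  have hup : d ≤ 2 ^ (k + 4) * √2 := by
    rw [logb_le_iff_le_rpow one_lt_two hd] at h₂
    convert h₂ using 1
    rw [show ((k : ℝ) + 9 / 2) = ((k + 4 : ℕ) : ℝ) + 1 / 2 by push_cast; ring, hsqrt]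
  have hs₁ : 5 / 4 < √2 := (lt_sqrt (by norm_num)).2 (by norm_num)
  have hs₂ : √2 < 3 / 2 := (sqrt_lt' (by norm_num)).2 (by norm_num)
  have hk : (0 : ℝ) < 2 ^ k := by positivity
  rw [not_and_or, not_le, not_le] at he
  rw [pow_succ] at hlow
  rw [show (2 : ℝ) ^ (k + 4) = 2 ^ k * 16 by ring] at hup
  rcases he with he | he
  · rw [pow_succ] at he
    rw [abs_of_pos (by nlinarith)]; nlinarith
  · rw [show (2 : ℝ) ^ (k + 5) = 2 ^ k * 32 by ring] at he
    rw [abs_of_neg (by nlinarith)]; nlinarith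

section

variable {X : Type*} [MetricSpace X]

theorem SlowlyOscillating.mul {f h : X → ℂ} (hf : SlowlyOscillating f)
    (hh : SlowlyOscillating h) : SlowlyOscillating fun x => f x * h x := by
  obtain ⟨⟨A, hA⟩, hf⟩ := hf
  obtain ⟨⟨B, hB⟩, hh⟩ := hh
  refine ⟨⟨A * B, fun x => ?_⟩, fun ε hε R hR => ?_⟩
  · rw [norm_mul]
    exact mul_le_mul (hA x) (hB x) (norm_nonneg _) ((norm_nonneg _).trans (hA x))
  have hA' (x : X) : ‖f x‖ ≤ |A| + 1 := by linarith [hA x, le_abs_self A]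
  have hB' (x : X) : ‖h x‖ ≤ |B| + 1 := by linarith [hB x, le_abs_self B]
  obtain ⟨F₁, hF₁, hf⟩ := hf (ε / 2 / (|B| + 1)) (by positivity) R hR
  obtain ⟨F₂, hF₂, hh⟩ := hh (ε / 2 / (|A| + 1)) (by positivity) R hR
  refine ⟨F₁ ∪ F₂, hF₁.union hF₂, fun x x' hx hx' hxx' => ?_⟩
  simp only [Set.mem_union, not_or] at hx hx'
  calc ‖f x * h x - f x' * h x'‖ = ‖(f x - f x') * h x + f x' * (h x - h x')‖ := by ring_nf
    _ ≤ ‖f x - f x'‖ * (|B| + 1) + (|A| + 1) * ‖h x - h x'‖ := by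
      refine (norm_add_le _ _).trans ?_
      rw [norm_mul, norm_mul]
      gcongr
      exacts [hB' x, hA' x']
    _ < ε / 2 / (|B| + 1) * (|B| + 1) + (|A| + 1) * (ε / 2 / (|A| + 1)) := by
      gcongr
      exacts [hf x x' hx.1 hx'.1 hxx', hh x x' hx.2 hx'.2 hxx']
    _ = ε := by field_simp; ring

theorem vanishesAtInfinity_of_eq_zero (hX : ∀ (x : X) (r : ℝ), (closedBall x r).Finite)
    (x₀ : X) (r : ℝ) {f : X → ℂ} (hf : ∀ x, r < dist x x₀ → f x = 0) :
    VanishesAtInfinity f := by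
  refine fun ε hε => (hX x₀ r).subset fun x hx => ?_
  by_contra hr
  have : ε ≤ ‖f x‖ := hx
  rw [hf x (not_le.1 hr), norm_zero] at this
  linarith

def dyadicAnnulus (x₀ : X) (r s : ℕ) : Set X :=
  {x | (2 : ℝ) ^ r ≤ dist x x₀ ∧ dist x x₀ ≤ (2 : ℝ) ^ s}

-- The cutoff keeps `logb 2 (dist x x₀) - a ≥ 0`, so the support lies in annuli indexed by `ℕ`.
noncomputable def radialWeight (x₀ : X) (a : ℕ) (x : X) : ℝ :=
  if (2 : ℝ) ^ a ≤ dist x x₀ then periodicBump (logb 2 (dist x x₀) - a) else 0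

variable {x₀ : X} {a : ℕ} {x : X}

theorem radialWeight_of_le (h : (2 : ℝ) ^ a ≤ dist x x₀) :
    radialWeight x₀ a x = periodicBump (logb 2 (dist x x₀) - a) := if_pos h

theorem radialWeight_nonneg : 0 ≤ radialWeight x₀ a x := by
  unfold radialWeight; split_ifs
  exacts [periodicBump_nonneg _, le_rfl]

theorem radialWeight_le_one : radialWeight x₀ a x ≤ 1 := by
  unfold radialWeight; split_ifs
  exacts [periodicBump_le_one _, zero_le_one]

theorem norm_radialWeight_mul_le {z : ℂ} (hz : ‖z‖ ≤ 1) :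
    ‖(radialWeight x₀ a x : ℂ) * z‖ ≤ radialWeight x₀ a x := by
  rw [norm_mul, Complex.norm_real, norm_of_nonneg radialWeight_nonneg]
  exact mul_le_of_le_one_right radialWeight_nonneg hz

theorem radialWeight_zero_add_radialWeight_three (h : 8 ≤ dist x x₀) :
    radialWeight x₀ 0 x + radialWeight x₀ 3 x = 1 := by
  rw [radialWeight_of_le (by linarith), radialWeight_of_le (by norm_num; linarith)]
  push_cast
  rw [sub_zero]
  exact periodicBump_add_periodicBump_sub_three _

theorem slowlyOscillating_radialWeight (hX : ∀ (x : X) (r : ℝ), (closedBall x r).Finite)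
    (x₀ : X) (a : ℕ) : SlowlyOscillating fun x => (radialWeight x₀ a x : ℂ) := by
  refine ⟨⟨1, fun x => ?_⟩, fun ε hε R hR => ?_⟩
  · rw [Complex.norm_real, norm_of_nonneg radialWeight_nonneg]
    exact radialWeight_le_one
  set M := (2 : ℝ) ^ a + R / (ε * log 2)
  have hlog2 : 0 < log 2 := log_pos one_lt_two
  have hMa : (2 : ℝ) ^ a ≤ M := le_add_of_nonneg_right (by positivity)
  have hM : 0 < M := by positivity
  refine ⟨closedBall x₀ M, hX x₀ M, fun x x' hx hx' hxx' => ?_⟩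
  simp only [mem_closedBall, not_le] at hx hx'
  have hRM : R < ε * (M * log 2) := by
    have : ε * (M * log 2) = ε * 2 ^ a * log 2 + R := by simp only [M]; field_simp
    rw [this]; linarith [show 0 < ε * 2 ^ a * log 2 by positivity]
  dsimp only
  rw [radialWeight_of_le (by linarith), radialWeight_of_le (by linarith), ← Complex.ofReal_sub,
    Complex.norm_real, Real.norm_eq_abs]
  calc |periodicBump (logb 2 (dist x x₀) - a) - periodicBump (logb 2 (dist x' x₀) - a)|
      ≤ |logb 2 (dist x x₀) - logb 2 (dist x' x₀)| := by
        simpa [Real.dist_eq] using lipschitzWith_periodicBump.dist_le_mul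
          (logb 2 (dist x x₀) - a) (logb 2 (dist x' x₀) - a)
    _ = |log (dist x x₀) - log (dist x' x₀)| / log 2 := by
        rw [logb, logb, ← sub_div, abs_div, abs_of_pos hlog2]
    _ ≤ |dist x x₀ - dist x' x₀| / M / log 2 := by
        gcongr; exact abs_log_sub_log_le hM hx.le hx'.le
    _ ≤ R / (M * log 2) := by
        rw [div_div]; gcongr; exact (abs_dist_sub_le x x' x₀).trans hxx'
    _ < ε := (div_lt_iff₀ (by positivity)).2 hRM

theorem exists_mem_dyadicAnnulus_of_radialWeight_ne_zero (h : radialWeight x₀ a x ≠ 0) :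
    ∃ n : ℕ, x ∈ dyadicAnnulus x₀ (6 * n + a + 1) (6 * n + a + 5) := by
  have hd : (2 : ℝ) ^ a ≤ dist x x₀ := by
    by_contra hd
    exact h (if_neg hd)
  have hpos : 0 < dist x x₀ := lt_of_lt_of_le (by positivity) hd
  set s := logb 2 (dist x x₀) - a
  have hs : 0 ≤ s := by
    have := (le_logb_iff_rpow_le one_lt_two hpos).2 (by rwa [rpow_natCast])
    linarith
  set n := ⌊s / 6⌋₊
  have h₀ : 6 * n ≤ s := by
    have := Nat.floor_le (div_nonneg hs (by norm_num : (0 : ℝ) ≤ 6)); linarith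
  have h₁ : s < 6 * n + 6 := by have := Nat.lt_floor_add_one (s / 6); linarith
  rw [radialWeight_of_le hd] at h
  obtain ⟨hs₁, hs₂⟩ :=
    mem_Ioo_of_periodicBump_pos h₀ h₁.le (lt_of_le_of_ne (periodicBump_nonneg _) (Ne.symm h))
  refine ⟨n, ?_, ?_⟩
  · rw [← rpow_natCast, ← le_logb_iff_rpow_le one_lt_two hpos]; push_cast; linarith
  · rw [← rpow_natCast, ← logb_le_iff_le_rpow one_lt_two hpos]; push_cast; linarith

theorem le_dist_of_half_le_radialWeight {n : ℕ} {z : X}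
    (hx : x ∈ dyadicAnnulus x₀ (6 * n + a + 1) (6 * n + a + 5))
    (hw : 1 / 2 ≤ radialWeight x₀ a x)
    (hz : z ∉ dyadicAnnulus x₀ (6 * n + a + 1) (6 * n + a + 5)) :
    (n : ℝ) ≤ dist x z := by
  have hd : (2 : ℝ) ^ a ≤ dist x x₀ := (pow_le_pow_right₀ one_le_two (by omega)).trans hx.1
  have hpos : 0 < dist x x₀ := lt_of_lt_of_le (by positivity) hd
  rw [radialWeight_of_le hd] at hw
  have ht₁ := (le_logb_iff_rpow_le one_lt_two hpos).2 (by rw [rpow_natCast]; exact hx.1)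
  have ht₂ := (logb_le_iff_le_rpow one_lt_two hpos).2 (by rw [rpow_natCast]; exact hx.2)
  push_cast at ht₁ ht₂
  obtain ⟨hs₁, hs₂⟩ :=
    mem_Icc_of_half_le_periodicBump (n := n) (by linarith) (by linarith) hw
  have hgap := two_pow_div_two_lt_abs_sub (6 * n + a) hpos (by push_cast; linarith)
    (by push_cast; linarith) hz
  have hn : 2 * n < 2 ^ (6 * n + a) :=
    Nat.lt_two_pow_self.trans_le (Nat.pow_le_pow_right two_pos (by omega))
  calc (n : ℝ) ≤ 2 ^ (6 * n + a) / 2 := by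
        rw [le_div_iff₀ two_pos]; exact_mod_cast (mul_comm n 2 ▸ hn).le
    _ ≤ |dist x x₀ - dist z x₀| := hgap.le
    _ ≤ dist x z := abs_dist_sub_le x z x₀

end

/-- Decomposition of a slowly oscillating contraction along the even/odd annuli:
`g = g_e + g_o` modulo functions vanishing at infinity, with `g_e, g_o` slowly
oscillating, supported on the even resp. odd annuli, and such that any point where
`|g_i| ≥ 1/2` lies deep (at distance ≥ n from the complement) inside its annulus. -/
theorem decomposition_even_odd {X : Type*} [MetricSpace X]
    (hX : ∀ (x : X) (r : ℝ), (Metric.closedBall x r).Finite) (x₀ : X)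
    (g : X → ℂ) (hso : SlowlyOscillating g) (hcontr : ∀ x, ‖g x‖ ≤ 1) :
    let Xe : ℕ → Set X := fun n =>
      {x | (2 : ℝ) ^ (6 * n + 1) ≤ dist x x₀ ∧ dist x x₀ ≤ (2 : ℝ) ^ (6 * n + 5)}
    let Xo : ℕ → Set X := fun n =>
      {x | (2 : ℝ) ^ (6 * n + 4) ≤ dist x x₀ ∧ dist x x₀ ≤ (2 : ℝ) ^ (6 * n + 8)}
    ∃ ge go : X → ℂ,
      SlowlyOscillating ge ∧ SlowlyOscillating go ∧
      (∀ x, ge x ≠ 0 → x ∈ ⋃ n, Xe n) ∧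
      (∀ x, go x ≠ 0 → x ∈ ⋃ n, Xo n) ∧
      VanishesAtInfinity (fun x => g x - ge x - go x) ∧
      (∀ (n : ℕ) (x : X), x ∈ Xe n → 1 / 2 ≤ ‖ge x‖ →
        ∀ z : X, z ∉ Xe n → (n : ℝ) ≤ dist x z) ∧
      (∀ (n : ℕ) (x : X), x ∈ Xo n → 1 / 2 ≤ ‖go x‖ →
        ∀ z : X, z ∉ Xo n → (n : ℝ) ≤ dist x z) := by
  intro Xe Xo
  refine ⟨fun x => radialWeight x₀ 0 x * g x, fun x => radialWeight x₀ 3 x * g x,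
    (slowlyOscillating_radialWeight hX x₀ 0).mul hso,
    (slowlyOscillating_radialWeight hX x₀ 3).mul hso,
    fun x hx => Set.mem_iUnion.2 (exists_mem_dyadicAnnulus_of_radialWeight_ne_zero
      (Complex.ofReal_ne_zero.1 (left_ne_zero_of_mul hx))),
    fun x hx => Set.mem_iUnion.2 (exists_mem_dyadicAnnulus_of_radialWeight_ne_zero
      (Complex.ofReal_ne_zero.1 (left_ne_zero_of_mul hx))),
    vanishesAtInfinity_of_eq_zero hX x₀ 8 fun x hx => ?_,
    fun n x hx hw z hz => le_dist_of_half_le_radialWeight (a := 0) hx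
      (hw.trans (norm_radialWeight_mul_le (hcontr x))) hz,
    fun n x hx hw z hz => le_dist_of_half_le_radialWeight (a := 3) hx
      (hw.trans (norm_radialWeight_mul_le (hcontr x))) hz⟩
  have hsum : (radialWeight x₀ 0 x : ℂ) + radialWeight x₀ 3 x = 1 := by
    exact_mod_cast radialWeight_zero_add_radialWeight_three hx.le
  linear_combination -g x * hsum
end

section
/- Let X, Y be locally finite metric spaces, and Φ : C_ν(X) → C_ν(Y) a trivial unital *-homomorphism induced by φ : Y → X, i.e., for every A ⊆ Y and every positive contraction g ∈ C_h(X), ‖π_Y(χ_A)·Φ(π_X(g))‖ = ‖π_X(χ_{φ[A]}·g)‖. Then φ is proper: the preimage under φ of every finite subset of X is finite. -/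
/-- The norm of the image of a bounded function in the quotient `ℓ∞/c₀`:
the least `c ≥ 0` such that `{x : |h x| ≥ c + ε}` is finite for every `ε > 0`. -/
noncomputable def qnorm {X : Type*} (h : X → ℂ) : ℝ :=
  sInf {c : ℝ | 0 ≤ c ∧ ∀ ε : ℝ, 0 < ε → {x : X | c + ε ≤ ‖h x‖}.Finite}

open Set

lemma slowlyOscillating_const {X : Type*} [MetricSpace X] (c : ℂ) :
    SlowlyOscillating (fun _ : X => c) :=
  ⟨⟨‖c‖, fun _ => le_rfl⟩, fun ε hε _ _ => ⟨∅, finite_empty, fun _ _ _ _ _ => by simpa using hε⟩⟩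

lemma qnorm_eq_zero_of_support_finite {X : Type*} {h : X → ℂ}
    (hS : (Function.support h).Finite) : qnorm h = 0 := by
  have hzero : (0 : ℝ) ∈ {c : ℝ | 0 ≤ c ∧ ∀ ε : ℝ, 0 < ε → {x : X | c + ε ≤ ‖h x‖}.Finite} := by
    refine ⟨le_rfl, fun ε hε => hS.subset fun x hx hx0 => ?_⟩
    simp only [mem_ofPred_eq, zero_add, hx0, norm_zero] at hx
    linarith
  exact le_antisymm (csInf_le ⟨0, fun c hc => hc.1⟩ hzero) (le_csInf ⟨0, hzero⟩ fun c hc => hc.1)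

lemma le_qnorm_of_infinite {X : Type*} {h : X → ℂ} {c : ℝ} (hbdd : ∃ C : ℝ, ∀ x, ‖h x‖ ≤ C)
    (hinf : {x : X | c ≤ ‖h x‖}.Infinite) : c ≤ qnorm h := by
  obtain ⟨C, hC⟩ := hbdd
  have hmem : max C 0 ∈
      {c : ℝ | 0 ≤ c ∧ ∀ ε : ℝ, 0 < ε → {x : X | c + ε ≤ ‖h x‖}.Finite} := by
    refine ⟨le_max_right _ _, fun ε hε => finite_empty.subset fun x hx => ?_⟩
    have := hC x
    have := le_max_left C 0
    simp only [mem_ofPred_eq] at hx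
    linarith
  refine le_csInf ⟨_, hmem⟩ fun d ⟨_, hd⟩ => ?_
  by_contra! hdc
  exact hinf ((hd (c - d) (sub_pos.2 hdc)).subset fun x hx => by simpa using hx)

lemma finite_norm_le_one_sub_of_vanishesAtInfinity {Y : Type*} {f : Y → ℂ}
    (hf : VanishesAtInfinity (fun y => f y - 1)) {ε : ℝ} (hε : 0 < ε) :
    {y : Y | ‖f y‖ ≤ 1 - ε}.Finite :=
  (hf ε hε).subset fun y hy => by
    have := norm_sub_norm_le (1 : ℂ) (f y)
    simp only [mem_ofPred_eq, norm_one, norm_sub_rev (1 : ℂ)] at hy this ⊢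
    linarith

lemma infinite_half_le_norm_indicator_mul {Y : Type*} {A : Set Y} {f : Y → ℂ}
    (hf : VanishesAtInfinity (fun y => f y - 1)) (hA : A.Infinite) :
    {y : Y | (1 / 2 : ℝ) ≤ ‖A.indicator (fun _ => (1 : ℂ)) y * f y‖}.Infinite := by
  refine (hA.sdiff (finite_norm_le_one_sub_of_vanishesAtInfinity hf one_half_pos)).mono ?_
  rintro y ⟨hyA, hy⟩
  simp only [mem_ofPred_eq, not_le] at hy ⊢
  rw [indicator_of_mem hyA, one_mul]
  linarith

lemma exists_norm_indicator_mul_le {Y : Type*} {A : Set Y} {f : Y → ℂ}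
    (hf : ∃ C : ℝ, ∀ y, ‖f y‖ ≤ C) :
    ∃ C : ℝ, ∀ y, ‖A.indicator (fun _ => (1 : ℂ)) y * f y‖ ≤ C := by
  obtain ⟨C, hC⟩ := hf
  refine ⟨C, fun y => ?_⟩
  simp only [← indicator_mul_left, one_mul]
  exact (norm_indicator_le_norm_self _ _).trans (hC y)

theorem trivial_hom_proper_general {X Y : Type*} [MetricSpace X] [MetricSpace Y]
    (φ : Y → X) (Φ : (X → ℂ) → (Y → ℂ))
    -- Φ maps (lifts of) C_ν(X) to C_ν(Y):
    (hmaps : ∀ g : X → ℂ, SlowlyOscillating g → SlowlyOscillating (Φ g))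
    -- Φ is unital:
    (hunital : VanishesAtInfinity (fun y => Φ (fun _ => 1) y - 1))
    -- Φ is trivial, induced by φ:
    (htrivial : ∀ (A : Set Y) (g : X → ℂ), SlowlyOscillating g →
      (∀ x, (g x).im = 0 ∧ 0 ≤ (g x).re ∧ (g x).re ≤ 1) →
      qnorm (fun y => A.indicator (fun _ => (1 : ℂ)) y * Φ g y) =
        qnorm (fun x => (φ '' A).indicator (fun _ => (1 : ℂ)) x * g x)) :
    ∀ F : Set X, F.Finite → (φ ⁻¹' F).Finite := by
  intro F hF
  by_contra hA
  have key := htrivial (φ ⁻¹' F) (fun _ => 1) (slowlyOscillating_const 1) fun _ => by norm_num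
  have hrhs : qnorm (fun x => (φ '' (φ ⁻¹' F)).indicator (fun _ => (1 : ℂ)) x * 1) = 0 :=
    qnorm_eq_zero_of_support_finite <| hF.subset <| (Function.support_mul_subset_left _ _).trans <|
      support_indicator_subset.trans (image_preimage_subset φ F)
  have hlhs := le_qnorm_of_infinite
    (exists_norm_indicator_mul_le (hmaps _ (slowlyOscillating_const 1)).1)
    (infinite_half_le_norm_indicator_mul hunital hA)
  rw [key, hrhs] at hlhs
  linarith

/-- If `Φ : C_ν(X) → C_ν(Y)` is a trivial unital *-homomorphism induced by `φ : Y → X`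
(for every `A ⊆ Y` and positive contraction `g ∈ C_h(X)`,
`‖π_Y(χ_A)·Φ(π_X(g))‖ = ‖π_X(χ_{φ[A]}·g)‖`), then `φ` is proper: preimages of finite
sets are finite.  Here `Φ` is represented by a map on lifts, which descends to a unital
*-homomorphism on the quotients. -/
theorem trivial_hom_proper {X Y : Type*} [MetricSpace X] [MetricSpace Y]
    (hX : ∀ (x : X) (r : ℝ), (Metric.closedBall x r).Finite)
    (hY : ∀ (y : Y) (r : ℝ), (Metric.closedBall y r).Finite)
    (φ : Y → X) (Φ : (X → ℂ) → (Y → ℂ))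
    -- Φ maps (lifts of) C_ν(X) to C_ν(Y):
    (hmaps : ∀ g : X → ℂ, SlowlyOscillating g → SlowlyOscillating (Φ g))
    -- Φ is well defined on the quotient by C_0:
    (hwd : ∀ g g' : X → ℂ, SlowlyOscillating g → SlowlyOscillating g' →
      VanishesAtInfinity (fun x => g x - g' x) →
      VanishesAtInfinity (fun y => Φ g y - Φ g' y))
    -- Φ is additive, multiplicative, and *-preserving modulo C_0:
    (hadd : ∀ g g' : X → ℂ, SlowlyOscillating g → SlowlyOscillating g' →
      VanishesAtInfinity (fun y => Φ (g + g') y - (Φ g y + Φ g' y)))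
    (hmul : ∀ g g' : X → ℂ, SlowlyOscillating g → SlowlyOscillating g' →
      VanishesAtInfinity (fun y => Φ (g * g') y - Φ g y * Φ g' y))
    (hstar : ∀ g : X → ℂ, SlowlyOscillating g →
      VanishesAtInfinity (fun y => Φ (fun x => starRingEnd ℂ (g x)) y - starRingEnd ℂ (Φ g y)))
    -- Φ is unital:
    (hunital : VanishesAtInfinity (fun y => Φ (fun _ => 1) y - 1))
    -- Φ is trivial, induced by φ:
    (htrivial : ∀ (A : Set Y) (g : X → ℂ), SlowlyOscillating g →
      (∀ x, (g x).im = 0 ∧ 0 ≤ (g x).re ∧ (g x).re ≤ 1) →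
      qnorm (fun y => A.indicator (fun _ => (1 : ℂ)) y * Φ g y) =
        qnorm (fun x => (φ '' A).indicator (fun _ => (1 : ℂ)) x * g x)) :
    ∀ F : Set X, F.Finite → (φ ⁻¹' F).Finite :=
  trivial_hom_proper_general φ Φ hmaps hunital htrivial
end
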